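/- Let R be a norm on ℝ^p with dual norm R*(z) = sup{zᵀw : R(w) ≤ 1}, let L : ℝ^p → ℝ be convex and differentiable, let λ > 0, β* ∈ ℝ^p, r > 0, and let β̃ be a minimizer of β ↦ L(β) + λ·R(β) over the closed Euclidean ball {β : ‖β − β*‖₂ ≤ r}. Assume R*(∇L(β*)) ≤ λ/2, and assume there is α > 0 such that L(β* + u) − L(β*) − ∇L(β*)ᵀu ≥ α‖u‖₂² for every u with ‖u‖₂ ≤ r and R(u)/2 + R(β*) − R(β* + u) ≥ 0. Let Φ := sup{R(u)/‖u‖₂ : u ≠ 0, R(u)/2 + R(β*) − R(β* + u) ≥ 0} and suppose Φ < ∞ and 3λΦ/(2α) < r. Then ‖β̃ − β*‖₂ < r and β̃ is a global minimizer of β ↦ L(β) + λ·R(β) over all of ℝ^p. -/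

import Mathlib

/-!
By the dual-norm bound on `∇L(β*)`, convexity of `L` and the basic inequality
`L(β̃) + λR(β̃) ≤ L(β*) + λR(β*)` force `u = β̃ - β*` into the cone
`R(β* + u) ≤ R(β*) + R(u)/2`. There restricted strong convexity gives
`α‖u‖² ≤ (3λ/2) R(u) ≤ (3λΦ/2) ‖u‖`, so `‖u‖ ≤ 3λΦ/(2α) < r`. Hence `β̃` is interior to the
ball, so it is a local minimizer of the convex objective, and therefore a global one.
-/

open scoped RealInnerProductSpace
open Set

theorem ConvexOn.le_sub_of_hasFDerivAt {E : Type*} [NormedAddCommGroup E] [NormedSpace ℝ E]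
    {f : E → ℝ} {f' : E →L[ℝ] ℝ} {x : E} (hf : ConvexOn ℝ univ f) (hd : HasFDerivAt f f' x)
    (u : E) : f' u ≤ f (x + u) - f x := by
  have hline : HasDerivAt (fun t : ℝ => x + t • u) u 0 := by
    simpa using ((hasDerivAt_id (0 : ℝ)).smul_const u).const_add x
  have hderiv : HasDerivAt (fun t : ℝ => f (x + t • u)) (f' u) 0 :=
    (by simpa using hd : HasFDerivAt f f' (x + (0 : ℝ) • u)).comp_hasDerivAt 0 hline
  have hconv : ConvexOn ℝ univ (fun t : ℝ => f (x + t • u)) := by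
    simpa [Function.comp_def, AffineMap.lineMap_apply, add_comm] using
      hf.comp_affineMap (AffineMap.lineMap x (x + u))
  simpa [slope_def_field] using
    hconv.le_slope_of_hasDerivAt (mem_univ 0) (mem_univ 1) one_pos hderiv

theorem Seminorm.apply_le_mul_of_forall_le_one {V : Type*} [AddCommGroup V] [Module ℝ V]
    (ρ : Seminorm ℝ V) (φ : V →ₗ[ℝ] ℝ) {c : ℝ} (h : ∀ w, ρ w ≤ 1 → φ w ≤ c) (v : V) :
    φ v ≤ c * ρ v := by
  have hlarge : ∀ t > ρ v, φ v ≤ c * t := fun t ht => by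
    have ht0 : 0 < t := (apply_nonneg ρ v).trans_lt ht
    have hw : ρ (t⁻¹ • v) ≤ 1 := by
      rw [map_smul_eq_mul, Real.norm_of_nonneg (inv_nonneg.2 ht0.le), inv_mul_le_iff₀ ht0]
      linarith
    have := h _ hw
    rwa [map_smul, smul_eq_mul, inv_mul_le_iff₀ ht0, mul_comm] at this
  exact ge_of_tendsto (((continuous_const_mul c).tendsto _).mono_left nhdsWithin_le_nhds)
    (eventually_nhdsWithin_of_forall (s := Ioi (ρ v)) hlarge)

def errorCone {V : Type*} [AddCommGroup V] [Module ℝ V] (ρ : Seminorm ℝ V) (β : V) : Set V :=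
  {u | ρ u / 2 + ρ β - ρ (β + u) ≥ 0}

section PenalizedEstimator

variable {E : Type*} [NormedAddCommGroup E] [InnerProductSpace ℝ E] [CompleteSpace E]
  {ρ : Seminorm ℝ E} {L : E → ℝ} {lam : ℝ} {βs βt : E}

theorem sub_mem_errorCone (hL : ConvexOn ℝ univ L) (hd : DifferentiableAt ℝ L βs) (hlam : 0 < lam)
    (hdev : ∀ v, ⟪gradient L βs, v⟫ ≤ lam / 2 * ρ v)
    (hbasic : L βt + lam * ρ βt ≤ L βs + lam * ρ βs) :
    βt - βs ∈ errorCone ρ βs := by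
  have hgrad := hL.le_sub_of_hasFDerivAt hd.hasFDerivAt (βt - βs)
  rw [← inner_gradient_left, add_sub_cancel] at hgrad
  have hdev' := hdev (βs - βt)
  rw [← neg_sub, inner_neg_right, map_neg_eq_map] at hdev'
  show ρ (βt - βs) / 2 + ρ βs - ρ (βs + (βt - βs)) ≥ 0
  rw [add_sub_cancel]
  exact (mul_nonneg_iff_of_pos_left hlam).1 (by linarith)

theorem mul_norm_sub_sq_le_mul_seminorm_sub {α : ℝ} (hlam : 0 ≤ lam)
    (hdev : ∀ v, ⟪gradient L βs, v⟫ ≤ lam / 2 * ρ v)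
    (hbasic : L βt + lam * ρ βt ≤ L βs + lam * ρ βs)
    (hRE : L βt - L βs - ⟪gradient L βs, βt - βs⟫ ≥ α * ‖βt - βs‖ ^ 2) :
    α * ‖βt - βs‖ ^ 2 ≤ 3 * lam / 2 * ρ (βt - βs) := by
  have hdev' := hdev (βs - βt)
  rw [← neg_sub, inner_neg_right, map_neg_eq_map] at hdev'
  have htri : ρ βs ≤ ρ βt + ρ (βt - βs) := by
    simpa [map_sub_rev ρ βs βt] using map_add_le_add ρ βt (βs - βt)
  calc α * ‖βt - βs‖ ^ 2 ≤ L βt - L βs - ⟪gradient L βs, βt - βs⟫ := hRE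
    _ ≤ lam * (ρ βs - ρ βt) + lam / 2 * ρ (βt - βs) := by linarith
    _ ≤ lam * ρ (βt - βs) + lam / 2 * ρ (βt - βs) := by gcongr; linarith
    _ = 3 * lam / 2 * ρ (βt - βs) := by ring

end PenalizedEstimator

theorem robust_penalized_local_is_global_general {p : ℕ}
    (R : EuclideanSpace ℝ (Fin p) → ℝ)
    (hR_add : ∀ x y, R (x + y) ≤ R x + R y)
    (hR_smul : ∀ (c : ℝ) (x), R (c • x) = |c| * R x)
    (L : EuclideanSpace ℝ (Fin p) → ℝ)
    (hL_conv : ConvexOn ℝ Set.univ L)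
    (hL_diff : ∀ x, DifferentiableAt ℝ L x)
    (lam : ℝ) (hlam : 0 < lam)
    (βs βt : EuclideanSpace ℝ (Fin p)) (r : ℝ) (hr : 0 < r)
    -- `βt` is a minimizer of `L + lam • R` over the closed ball of radius `r` around `βs`
    (hfeas : ‖βt - βs‖ ≤ r)
    (hmin : ∀ β, ‖β - βs‖ ≤ r → L βt + lam * R βt ≤ L β + lam * R β)
    -- deviation condition: the dual norm of the gradient at `βs` is at most `lam/2`
    (hdev : ∀ w, R w ≤ 1 → ⟪gradient L βs, w⟫ ≤ lam / 2)
    -- restricted eigenvalue condition on the cone intersected with the ball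
    (α : ℝ) (hα : 0 < α)
    (hRE : ∀ u, ‖u‖ ≤ r → R u / 2 + R βs - R (βs + u) ≥ 0 →
      L (βs + u) - L βs - ⟪gradient L βs, u⟫ ≥ α * ‖u‖ ^ 2)
    -- `Φ` is an upper bound for the subspace compatibility constant of the cone
    (Φ : ℝ)
    (hΦ : ∀ u, u ≠ 0 → R u / 2 + R βs - R (βs + u) ≥ 0 → R u ≤ Φ * ‖u‖)
    -- scaling condition: the error bound is strictly smaller than the local radius
    (hscale : 3 * lam * Φ / (2 * α) < r) :
    ‖βt - βs‖ < r ∧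
    ∀ β : EuclideanSpace ℝ (Fin p), L βt + lam * R βt ≤ L β + lam * R β := by
  set ρ : Seminorm ℝ _ := Seminorm.of R hR_add hR_smul
  have hdual : ∀ v, ⟪gradient L βs, v⟫ ≤ lam / 2 * ρ v :=
    ρ.apply_le_mul_of_forall_le_one (innerₛₗ ℝ (gradient L βs)) hdev
  have hbasic := hmin βs (by simpa using hr.le)
  have hcone := sub_mem_errorCone hL_conv (hL_diff βs) hlam hdual hbasic
  have hlt : ‖βt - βs‖ < r := by
    rcases eq_or_ne (βt - βs) 0 with h | h
    · simpa [h] using hr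
    have hbound := mul_norm_sub_sq_le_mul_seminorm_sub hlam.le hdual hbasic
      (by simpa using hRE _ hfeas hcone)
    have hcompat : ρ (βt - βs) ≤ Φ * ‖βt - βs‖ := hΦ _ h hcone
    have hαu : α * ‖βt - βs‖ ≤ 3 * lam / 2 * Φ :=
      le_of_mul_le_mul_right (by nlinarith) (norm_pos_iff.2 h)
    calc ‖βt - βs‖ ≤ 3 * lam * Φ / (2 * α) := by rw [le_div_iff₀ (by positivity)]; linarith
      _ < r := hscale
  have hloc : IsLocalMin (fun β => L β + lam * ρ β) βt :=
    Filter.mem_of_superset (Metric.isOpen_ball.mem_nhds (mem_ball_iff_norm.2 hlt))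
      fun β hβ => hmin β (mem_ball_iff_norm.1 hβ).le
  exact ⟨hlt, IsMinOn.of_isLocalMin_of_convex_univ hloc (hL_conv.add (ρ.convexOn.smul hlam.le))⟩

/-- **The locally constrained robust penalized estimator is the global optimum.**
Under the deviation condition, the restricted eigenvalue condition, and the scaling
`3λΦ/(2α) < r`, the constrained minimizer `β̃` satisfies `‖β̃ - β*‖₂ < r` and is a global
minimizer of `β ↦ L(β) + λR(β)` over all of `ℝ^p`. -/
theorem robust_penalized_local_is_global {p : ℕ}
    (R : EuclideanSpace ℝ (Fin p) → ℝ)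
    (hR_add : ∀ x y, R (x + y) ≤ R x + R y)
    (hR_smul : ∀ (c : ℝ) (x), R (c • x) = |c| * R x)
    (hR_pos : ∀ x, x ≠ 0 → 0 < R x)
    (L : EuclideanSpace ℝ (Fin p) → ℝ)
    (hL_conv : ConvexOn ℝ Set.univ L)
    (hL_diff : ∀ x, DifferentiableAt ℝ L x)
    (lam : ℝ) (hlam : 0 < lam)
    (βs βt : EuclideanSpace ℝ (Fin p)) (r : ℝ) (hr : 0 < r)
    -- `βt` is a minimizer of `L + lam • R` over the closed ball of radius `r` around `βs`
    (hfeas : ‖βt - βs‖ ≤ r)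
    (hmin : ∀ β, ‖β - βs‖ ≤ r → L βt + lam * R βt ≤ L β + lam * R β)
    -- deviation condition: the dual norm of the gradient at `βs` is at most `lam/2`
    (hdev : ∀ w, R w ≤ 1 → ⟪gradient L βs, w⟫ ≤ lam / 2)
    -- restricted eigenvalue condition on the cone intersected with the ball
    (α : ℝ) (hα : 0 < α)
    (hRE : ∀ u, ‖u‖ ≤ r → R u / 2 + R βs - R (βs + u) ≥ 0 →
      L (βs + u) - L βs - ⟪gradient L βs, u⟫ ≥ α * ‖u‖ ^ 2)
    -- `Φ` is an upper bound for the subspace compatibility constant of the cone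
    (Φ : ℝ) (hΦ0 : 0 ≤ Φ)
    (hΦ : ∀ u, u ≠ 0 → R u / 2 + R βs - R (βs + u) ≥ 0 → R u ≤ Φ * ‖u‖)
    -- scaling condition: the error bound is strictly smaller than the local radius
    (hscale : 3 * lam * Φ / (2 * α) < r) :
    ‖βt - βs‖ < r ∧
    ∀ β : EuclideanSpace ℝ (Fin p), L βt + lam * R βt ≤ L β + lam * R β :=
  robust_penalized_local_is_global_general R hR_add hR_smul L hL_conv hL_diff lam hlam βs βt r hr
    hfeas hmin hdev α hα hRE Φ hΦ hscale
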